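/- arXiv:2106.13637 — 2 statements merged into one kernel-verified Lean document; each statement's English description precedes it below -/
import Mathlib

section
/- Let d ≥ 1, A ∈ ℝ^{d×d}, B ∈ ℝ^d, and h > 0. Let u : ℝ → ℝ be continuous, g : ℝ → ℝ^d be continuous, and X : ℝ → ℝ^d be differentiable with X'(t) = A X(t) + B u(t−h) + g(t) for all t ∈ ℝ. Define the Artstein transform X_A(t) = exp(hA) X(t) + ∫_{t−h}^{t} exp((t−s)A) B u(s) ds. Then X_A is differentiable on ℝ and X_A'(t) = A X_A(t) + B u(t) + exp(hA) g(t) for all t ∈ ℝ. -/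
open Matrix

/-- The Artstein transform `X_A(t) = exp(hA) X(t) + ∫_{t−h}^{t} exp((t−s)A) B u(s) ds` of a
solution of `X' = A X + B u(·−h) + g` satisfies `X_A' = A X_A + B u + exp(hA) g`. -/
theorem artstein_transform_dynamics (d : ℕ) (hd : 1 ≤ d)
    (A : Matrix (Fin d) (Fin d) ℝ) (B : Fin d → ℝ) (h : ℝ) (hh : 0 < h)
    (u : ℝ → ℝ) (hu : Continuous u) (g : ℝ → (Fin d → ℝ)) (hg : Continuous g)
    (X : ℝ → (Fin d → ℝ))
    (hX : ∀ t : ℝ, HasDerivAt X (A.mulVec (X t) + u (t - h) • B + g t) t)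
    (XA : ℝ → (Fin d → ℝ))
    (hXA : XA = fun t => (NormedSpace.exp (h • A)).mulVec (X t)
      + ∫ s in (t - h)..t, u s • (NormedSpace.exp ((t - s) • A)).mulVec B) :
    ∀ t : ℝ, HasDerivAt XA
      (A.mulVec (XA t) + u t • B + (NormedSpace.exp (h • A)).mulVec (g t)) t := by
  letI : SeminormedRing (Matrix (Fin d) (Fin d) ℝ) := Matrix.linftyOpSemiNormedRing
  letI : NormedRing (Matrix (Fin d) (Fin d) ℝ) := Matrix.linftyOpNormedRing
  letI : NormedAlgebra ℝ (Matrix (Fin d) (Fin d) ℝ) := Matrix.linftyOpNormedAlgebra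
  letI : NormedAlgebra ℚ (Matrix (Fin d) (Fin d) ℝ) := Matrix.linftyOpNormedAlgebra
  set E : ℝ → Matrix (Fin d) (Fin d) ℝ := fun t => NormedSpace.exp (t • A) with hE
  -- continuous linear version of mulVec
  let L : Matrix (Fin d) (Fin d) ℝ →L[ℝ] ((Fin d → ℝ) →L[ℝ] (Fin d → ℝ)) :=
    LinearMap.toContinuousLinearMap
      ((LinearMap.toContinuousLinearMap.toLinearMap).comp Matrix.toLin'.toLinearMap)
  have hL : ∀ (M : Matrix (Fin d) (Fin d) ℝ) (v : Fin d → ℝ), L M v = M.mulVec v := fun M v => rfl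
  have hEc : Continuous E := by
    exact NormedSpace.exp_continuous.comp (continuous_id.smul continuous_const)
  set v : ℝ → (Fin d → ℝ) := fun s => u s • (E (-s)).mulVec B with hv_def
  have hv : Continuous v := by
    have : Continuous fun s : ℝ => L (E (-s)) B :=
      (L.continuous.comp (hEc.comp continuous_neg)).clm_apply continuous_const
    simp only [hL] at this
    exact hu.smul this
  set H : ℝ → (Fin d → ℝ) := fun t => ∫ s in (0:ℝ)..t, v s with hH_def
  have hH : ∀ t : ℝ, HasDerivAt H (v t) t := fun t =>
    intervalIntegral.integral_hasDerivAt_right (hv.intervalIntegrable 0 t)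
      (hv.stronglyMeasurableAtFilter MeasureTheory.volume (nhds t)) hv.continuousAt
  set G : ℝ → (Fin d → ℝ) := fun t => H t - H (t - h) with hG_def
  have hG : ∀ t : ℝ, HasDerivAt G (v t - v (t - h)) t := by
    intro t
    have h2 : HasDerivAt (fun t : ℝ => H (t - h)) ((1:ℝ) • v (t - h)) t :=
      by have := (hH (t - h)).scomp t ((hasDerivAt_id t).sub_const h); exact this
    rw [one_smul] at h2
    exact (hH t).sub h2
  -- Commutation facts
  have hcomm : ∀ a b : ℝ, Commute (a • A) (b • A) :=
    fun a b => ((Commute.refl A).smul_right b).smul_left a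
  have hmul : ∀ a b : ℝ, E a * E b = E (a + b) := by
    intro a b
    show NormedSpace.exp (a • A) * NormedSpace.exp (b • A) = NormedSpace.exp ((a + b) • A)
    rw [show (a + b) • A = a • A + b • A from add_smul a b A]
    exact (NormedSpace.exp_add_of_commute (hcomm a b)).symm
  have hE0 : E 0 = 1 := by show NormedSpace.exp ((0:ℝ) • A) = 1; rw [zero_smul, NormedSpace.exp_zero]
  -- rewrite the integral
  have key : ∀ t : ℝ,
      (∫ s in (t - h)..t, u s • (NormedSpace.exp ((t - s) • A)).mulVec B) = (E t).mulVec (G t) := by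
    intro t
    have h1 : ∀ s : ℝ, u s • (NormedSpace.exp ((t - s) • A)).mulVec B = L (E t) (v s) := by
      intro s
      have ht : NormedSpace.exp ((t - s) • A) = E t * E (-s) := by
        rw [hmul, sub_eq_add_neg t s]
      rw [ht, hL, hv_def]
      simp [Matrix.mulVec_smul, Matrix.mulVec_mulVec]
    simp_rw [h1]
    rw [(L (E t)).intervalIntegral_comp_comm (hv.intervalIntegrable _ _), hL]
    have h2 := intervalIntegral.integral_add_adjacent_intervals (μ := MeasureTheory.volume)
      (hv.intervalIntegrable 0 (t - h)) (hv.intervalIntegrable (t - h) t)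
    have h3 : (∫ s in (t - h)..t, v s) = G t := eq_sub_of_add_eq' h2
    rw [h3]
  have hXA' : XA = fun t => L (E h) (X t) + L (E t) (G t) := by
    rw [hXA]
    funext t
    rw [key t, hL, hL]
  intro t
  have hc : HasDerivAt (fun t : ℝ => L (E t)) (L (A * E t)) t :=
    L.hasFDerivAt.comp_hasDerivAt t (hasDerivAt_exp_smul_const' A t)
  have term1 : HasDerivAt (fun t => L (E h) (X t))
      (L (E h) (A.mulVec (X t) + u (t - h) • B + g t)) t :=
    (L (E h)).hasFDerivAt.comp_hasDerivAt t (hX t)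
  have term2 : HasDerivAt (fun t => L (E t) (G t))
      (L (A * E t) (G t) + L (E t) (v t - v (t - h))) t := hc.clm_apply (hG t)
  have total := term1.add term2
  rw [hXA']
  refine total.congr_deriv ?_
  simp only [hL]
  -- algebraic identities
  have hAE : ∀ a : ℝ, A * E a = E a * A := by
    intro a
    have : Commute A (E a) := Commute.exp_right ((Commute.refl A).smul_right a)
    exact this.eq
  have id1 : (E t).mulVec (v t) = u t • B := by
    rw [hv_def]
    simp only [Matrix.mulVec_smul, Matrix.mulVec_mulVec, hmul, add_neg_cancel, hE0,
      Matrix.one_mulVec]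
  have id2 : (E t).mulVec (v (t - h)) = u (t - h) • (E h).mulVec B := by
    rw [hv_def]
    simp only [Matrix.mulVec_smul, Matrix.mulVec_mulVec, hmul]
    norm_num
  have id3 : (E h).mulVec (A.mulVec (X t)) = A.mulVec ((E h).mulVec (X t)) := by
    rw [Matrix.mulVec_mulVec, Matrix.mulVec_mulVec, hAE]
  have id4 : (A * E t).mulVec (G t) = A.mulVec ((E t).mulVec (G t)) := by
    rw [Matrix.mulVec_mulVec]
  have hEh : NormedSpace.exp (h • A) = E h := rfl
  rw [hEh]
  simp only [Matrix.mulVec_add, Matrix.mulVec_smul, Matrix.mulVec_sub, id1, id2, id3, id4]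
  abel
end

section
/- Let d ≥ 1, A ∈ ℝ^{d×d}, B ∈ ℝ^d, K ∈ ℝ^{1×d}, and h > 0. Let g : ℝ → ℝ^d be continuous, let Ẑ : ℝ → ℝ^d be differentiable, let u : ℝ → ℝ be continuous, and define Ẑ_A(t) = exp(hA) Ẑ(t) + ∫_{t−h}^{t} exp((t−s)A) B u(s) ds. Assume that u(t) = K Ẑ_A(t) for all t ∈ ℝ and that Ẑ'(t) = A Ẑ(t) + B u(t−h) + g(t) for all t ∈ ℝ. Then Ẑ_A is differentiable and satisfies the delay-free closed-loop dynamics Ẑ_A'(t) = (A + B K) Ẑ_A(t) + exp(hA) g(t) for all t ∈ ℝ. -/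
open Matrix

theorem vecMulVec_mulVec_aux {d : ℕ} (B K v : Fin d → ℝ) :
    (Matrix.vecMulVec B K).mulVec v = (K ⬝ᵥ v) • B := by
  funext i
  simp only [Matrix.vecMulVec, Matrix.mulVec, dotProduct, Matrix.of_apply,
    Pi.smul_apply, smul_eq_mul, Finset.mul_sum, Finset.sum_mul]
  exact Finset.sum_congr rfl fun j _ => by ring

/-- If the control is given by the predictor feedback `u(t) = K Ẑ_A(t)`, where `Ẑ_A` is the
Artstein transform of the observer state `Ẑ` with `Ẑ' = A Ẑ + B u(·−h) + g`, then `Ẑ_A`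
satisfies the delay-free closed-loop dynamics `Ẑ_A' = (A + B K) Ẑ_A + exp(hA) g`. -/
theorem predictor_feedback_closed_loop (d : ℕ) (hd : 1 ≤ d)
    (A : Matrix (Fin d) (Fin d) ℝ) (B : Fin d → ℝ) (K : Fin d → ℝ) (h : ℝ) (hh : 0 < h)
    (g : ℝ → (Fin d → ℝ)) (hg : Continuous g)
    (Zhat : ℝ → (Fin d → ℝ)) (hZhat : Differentiable ℝ Zhat)
    (u : ℝ → ℝ) (hu : Continuous u)
    (ZA : ℝ → (Fin d → ℝ))
    (hZA : ZA = fun t => (NormedSpace.exp (h • A)).mulVec (Zhat t)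
      + ∫ s in (t - h)..t, u s • (NormedSpace.exp ((t - s) • A)).mulVec B)
    (hfeedback : ∀ t : ℝ, u t = K ⬝ᵥ ZA t)
    (hdyn : ∀ t : ℝ, HasDerivAt Zhat (A.mulVec (Zhat t) + u (t - h) • B + g t) t) :
    ∀ t : ℝ, HasDerivAt ZA
      ((A + Matrix.vecMulVec B K).mulVec (ZA t) + (NormedSpace.exp (h • A)).mulVec (g t)) t := by
  letI : SeminormedRing (Matrix (Fin d) (Fin d) ℝ) := Matrix.linftyOpSemiNormedRing
  letI : NormedRing (Matrix (Fin d) (Fin d) ℝ) := Matrix.linftyOpNormedRing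
  letI : NormedAlgebra ℝ (Matrix (Fin d) (Fin d) ℝ) := Matrix.linftyOpNormedAlgebra
  set E : ℝ → Matrix (Fin d) (Fin d) ℝ := fun r => NormedSpace.exp (r • A) with hEdef
  -- derivative of E
  have hEderiv : ∀ t : ℝ, HasDerivAt E (A * E t) t := fun t =>
    hasDerivAt_exp_smul_const' (𝕂 := ℝ) A t
  have hEcomm : ∀ t : ℝ, E t * A = A * E t := fun t =>
    (hasDerivAt_exp_smul_const (𝕂 := ℝ) A t).unique
      (hasDerivAt_exp_smul_const' (𝕂 := ℝ) A t)
  have hEadd : ∀ a b : ℝ, E (a + b) = E a * E b := fun a b => by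
    simp only [hEdef, add_smul]
    exact Matrix.exp_add_of_commute _ _ (((Commute.refl A).smul_left a).smul_right b)
  have hEzero : E 0 = 1 := by simp [hEdef]
  have hEcont : Continuous E := continuous_iff_continuousAt.2 fun t =>
    (hEderiv t).continuousAt
  -- the integrand with the exponential factored out
  set f : ℝ → (Fin d → ℝ) := fun s => u s • (E (-s)).mulVec B with hfdef
  have hfcont : Continuous f :=
    hu.smul ((hEcont.comp continuous_neg).matrix_mulVec continuous_const)
  set G : ℝ → (Fin d → ℝ) := fun t => ∫ s in (t - h)..t, f s with hGdef
  have hGeq : G = fun t => (∫ s in (0:ℝ)..t, f s) - ∫ s in (0:ℝ)..(t - h), f s := by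
    funext t
    rw [hGdef]
    refine eq_sub_iff_add_eq'.2 ?_
    exact intervalIntegral.integral_add_adjacent_intervals
      (hfcont.intervalIntegrable _ _) (hfcont.intervalIntegrable _ _)
  have hGderiv : ∀ t : ℝ, HasDerivAt G (f t - f (t - h)) t := by
    intro t
    rw [hGeq]
    have h1 : ∀ b : ℝ, HasDerivAt (fun r => ∫ s in (0:ℝ)..r, f s) (f b) b := fun b =>
      (hfcont.integral_hasStrictDerivAt 0 b).hasDerivAt
    have h2 : HasDerivAt (fun t : ℝ => ∫ s in (0:ℝ)..(t - h), f s) (f (t - h)) t := by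
      have := (h1 (t - h)).scomp t ((hasDerivAt_id t).sub_const h)
      simpa [Function.comp_def] using this
    exact (h1 t).sub h2
  -- continuous linear maps
  have hfin : FiniteDimensional ℝ (Matrix (Fin d) (Fin d) ℝ) := by infer_instance
  set Φ : Matrix (Fin d) (Fin d) ℝ →L[ℝ] (Fin d → ℝ) →L[ℝ] (Fin d → ℝ) :=
    LinearMap.toContinuousLinearMap
      ((LinearMap.toContinuousLinearMap :
        ((Fin d → ℝ) →ₗ[ℝ] (Fin d → ℝ)) ≃ₗ[ℝ] ((Fin d → ℝ) →L[ℝ] (Fin d → ℝ))).toLinearMap ∘ₗ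
        (Matrix.toLin' : Matrix (Fin d) (Fin d) ℝ ≃ₗ[ℝ] _).toLinearMap) with hΦdef
  have hΦapp : ∀ (M : Matrix (Fin d) (Fin d) ℝ) (v : Fin d → ℝ), Φ M v = M.mulVec v := by
    intro M v
    simp [hΦdef, Matrix.toLin'_apply]
  -- key rewriting of the integral
  have key : ∀ t : ℝ, (∫ s in (t - h)..t, u s • (E (t - s)).mulVec B) = (E t).mulVec (G t) := by
    intro t
    have h1 : ∀ s : ℝ, u s • (E (t - s)).mulVec B = Φ (E t) (f s) := by
      intro s
      rw [hΦapp, hfdef]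
      simp only
      rw [Matrix.mulVec_smul, Matrix.mulVec_mulVec, ← hEadd]
      ring_nf
    simp_rw [h1]
    rw [(Φ (E t)).intervalIntegral_comp_comm (hfcont.intervalIntegrable _ _), hΦapp]
  have hZAeq : ZA = fun t => (E h).mulVec (Zhat t) + (E t).mulVec (G t) := by
    rw [hZA]; funext t; rw [← key t]
  intro t
  -- derivative of the first summand
  have hL1 : HasDerivAt (fun t => (E h).mulVec (Zhat t))
      ((E h).mulVec (A.mulVec (Zhat t) + u (t - h) • B + g t)) t := by
    have := ((hasDerivAt_const t (Φ (E h))).clm_apply (hdyn t))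
    simpa [hΦapp] using this
  -- derivative of the second summand
  have hL2 : HasDerivAt (fun t => (E t).mulVec (G t))
      ((A * E t).mulVec (G t) + (E t).mulVec (f t - f (t - h))) t := by
    have hΦE : HasDerivAt (fun t => Φ (E t)) (Φ (A * E t)) t :=
      Φ.hasFDerivAt.comp_hasDerivAt t (hEderiv t)
    have := hΦE.clm_apply (hGderiv t)
    simpa [hΦapp] using this
  have hsum := hL1.add hL2
  rw [hZAeq]
  have hZAt : ZA t = (E h).mulVec (Zhat t) + (E t).mulVec (G t) := by rw [hZAeq]
  refine HasDerivAt.congr_deriv hsum ?_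
  have e1 : (E t).mulVec (f t) = u t • B := by
    rw [hfdef]
    simp only
    rw [Matrix.mulVec_smul, Matrix.mulVec_mulVec, ← hEadd, add_neg_cancel, hEzero,
      Matrix.one_mulVec]
  have e2 : (E t).mulVec (f (t - h)) = u (t - h) • (E h).mulVec B := by
    rw [hfdef]
    simp only
    rw [Matrix.mulVec_smul, Matrix.mulVec_mulVec, ← hEadd]
    ring_nf
  have e3 : (E h).mulVec (A.mulVec (Zhat t)) = A.mulVec ((E h).mulVec (Zhat t)) := by
    rw [Matrix.mulVec_mulVec, Matrix.mulVec_mulVec, hEcomm]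
  have e4 : (A * E t).mulVec (G t) = A.mulVec ((E t).mulVec (G t)) := by
    rw [Matrix.mulVec_mulVec]
  simp only [Matrix.mulVec_sub, e1, e2, Matrix.mulVec_add, Matrix.mulVec_smul, e3, e4,
    Matrix.add_mulVec, vecMulVec_mulVec_aux, hfeedback t, hZAt, dotProduct_add]
  module
end
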